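/- The multiple Bernoulli polynomials satisfy the difference relation B_{r,n}(z + ω_j | ω₁, ..., ω_r) − B_{r,n}(z | ω₁, ..., ω_r) = n · B_{r−1,n−1}(z | ω₁, ..., ω̂_j, ..., ω_r), where ω̂_j denotes omission of the j-th parameter. -/

import Mathlib

open Complex

/-- The power series of `e^{wt}` in `t`. -/
noncomputable def expPS (w : ℂ) : PowerSeries ℂ :=
  PowerSeries.mk fun n => w ^ n / n.factorial

/-- `B : ℕ → ℂ` is the sequence of multiple Bernoulli polynomial values
`B n = B_{r,n}(z | ω)` iff the defining generating-function identity
`t^r e^{zt} = (∏_k (e^{ω_k t} - 1)) · Σ_n B n t^n/n!` holds. -/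
def IsMultBernoulli (r : ℕ) (z : ℂ) (ω : Fin r → ℂ) (B : ℕ → ℂ) : Prop :=
  (∏ k, (expPS (ω k) - 1)) * PowerSeries.mk (fun n => B n / n.factorial)
    = (PowerSeries.X : PowerSeries ℂ) ^ r * expPS z

open PowerSeries

/-!
Write `egf B = Σ B n tⁿ/n!` and `P = ∏ₖ (e^{ω_k t} - 1)`. Since `e^{(z + ω_j)t} - e^{zt} = e^{zt}(e^{ω_j t} - 1)`
and `P` is `e^{ω_j t} - 1` times the product without the `j`-th factor, both `egf B' - egf B` and
`t · egf B''` become `t^{r+1} e^{zt}` after multiplication by `P`. As `P ≠ 0` in the domain `ℂ⟦t⟧`,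
`egf B' - egf B = t · egf B''`, and comparing coefficients of `tⁿ/n!` gives the difference relation.
-/

lemma expPS_eq_rescale_exp (w : ℂ) : expPS w = rescale w (PowerSeries.exp ℂ) := by
  ext n
  simp [expPS, PowerSeries.exp, coeff_rescale, div_eq_mul_inv]

lemma expPS_add (a b : ℂ) : expPS (a + b) = expPS a * expPS b := by
  simp only [expPS_eq_rescale_exp, exp_mul_exp_eq_exp_add]

lemma expPS_sub_one_ne_zero {w : ℂ} (hw : w ≠ 0) : expPS w - 1 ≠ 0 := by
  intro h
  have h₁ := congrArg (coeff 1) h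
  simp [expPS] at h₁
  exact hw h₁

noncomputable def egf (B : ℕ → ℂ) : PowerSeries ℂ :=
  mk fun n => B n / n.factorial

lemma egf_injective : Function.Injective egf := by
  intro A B h
  funext n
  have hn := congrArg (coeff n) h
  simp only [egf, coeff_mk] at hn
  exact (div_left_inj' (Nat.cast_ne_zero.2 n.factorial_ne_zero)).1 hn

lemma egf_sub (A B : ℕ → ℂ) : egf A - egf B = egf (A - B) := by
  ext n
  simp [egf, sub_div]

lemma X_mul_egf (C : ℕ → ℂ) : X * egf C = egf fun n => n * C (n - 1) := by
  ext (_ | m)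
  · simp [egf]
  · simp only [coeff_succ_X_mul, egf, coeff_mk, Nat.factorial_succ, Nat.cast_mul,
      Nat.add_sub_cancel, Nat.cast_succ]
    field_simp

lemma IsMultBernoulli.prod_mul_egf {r : ℕ} {z : ℂ} {ω : Fin r → ℂ} {B : ℕ → ℂ}
    (h : IsMultBernoulli r z ω B) : (∏ k, (expPS (ω k) - 1)) * egf B = X ^ r * expPS z :=
  h

lemma IsMultBernoulli.egf_sub_eq_X_mul_egf {r : ℕ} {z : ℂ} {ω : Fin (r + 1) → ℂ}
    {j : Fin (r + 1)} (hω : ∀ k, ω k ≠ 0) {B B' B'' : ℕ → ℂ}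
    (hB : IsMultBernoulli (r + 1) z ω B) (hB' : IsMultBernoulli (r + 1) (z + ω j) ω B')
    (hB'' : IsMultBernoulli r z (fun k => ω (j.succAbove k)) B'') :
    egf B' - egf B = X * egf B'' := by
  have hP : ∏ k, (expPS (ω k) - 1) ≠ 0 :=
    Finset.prod_ne_zero_iff.2 fun k _ => expPS_sub_one_ne_zero (hω k)
  refine mul_left_cancel₀ hP ?_
  calc (∏ k, (expPS (ω k) - 1)) * (egf B' - egf B)
      = X ^ (r + 1) * expPS z * (expPS (ω j) - 1) := by
        rw [mul_sub, hB.prod_mul_egf, hB'.prod_mul_egf, expPS_add]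
        ring
    _ = (expPS (ω j) - 1) * (∏ k, (expPS (ω (j.succAbove k)) - 1)) * (X * egf B'') := by
        rw [mul_mul_mul_comm, hB''.prod_mul_egf]
        ring
    _ = (∏ k, (expPS (ω k) - 1)) * (X * egf B'') := by
        rw [← Fin.prod_univ_succAbove (fun k => expPS (ω k) - 1) j]

/-- Difference relation:
`B_{r+1,n}(z + ω_j | ω) − B_{r+1,n}(z | ω) = n · B_{r,n−1}(z | ω with ω_j omitted)`. -/
theorem multBernoulli_diff (r : ℕ) (z : ℂ) (ω : Fin (r + 1) → ℂ) (j : Fin (r + 1))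
    (hω : ∀ k, ω k ≠ 0)
    (B B' B'' : ℕ → ℂ)
    (hB : IsMultBernoulli (r + 1) z ω B)
    (hB' : IsMultBernoulli (r + 1) (z + ω j) ω B')
    (hB'' : IsMultBernoulli r z (fun k => ω (j.succAbove k)) B'') :
    ∀ n : ℕ, 1 ≤ n → B' n - B n = (n : ℂ) * B'' (n - 1) := by
  have key := hB.egf_sub_eq_X_mul_egf hω hB' hB''
  rw [egf_sub, X_mul_egf] at key
  intro n _
  exact congrFun (egf_injective key) n
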